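/- Lipschitz dependence of the adaptive kernel on the auxiliary measure (Lemma 4.2). Fix β ∈ [0, 1]. For any two probability measures μ and ν on (X, B), the kernels P_μ and P_ν, viewed as linear operators on L^∞_{V^β}, satisfy |||P_μ − P_ν|||_{V^β} ≤ 2 ‖μ − ν‖_{V^β}. -/

import Mathlib

/-!
The `θ P` part is common to `P_μ` and `P_ν` and cancels. Against `∫ μ(dy) T(y, x, ·)` a
function `f` integrates to `μ(a f) + f(x) μ(1 - a)`, where `a(y) ∈ [0, 1]` is the acceptance
probability, so the difference is `(μ - ν)(a f) + V^β(x) (μ - ν)((f(x) / V^β(x)) (1 - a))`.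
Both test functions are bounded by `V^β`, the second because `|f(x)| ≤ V^β(x)` and `1 ≤ V^β`,
so each term is at most `‖μ - ν‖_{V^β}` up to the factor `V^β(x) ≥ 1`. Lean's junk value `0`
for non-integrable functions is harmless: a finite `V^β`-distance transfers integrability of
`V^β`-dominated functions between `μ` and `ν`.
-/

open MeasureTheory Real Filter
open scoped ENNReal

noncomputable section

variable {𝒳 : Type*} [MeasurableSpace 𝒳]

/-- Equi-energy swap acceptance probability. -/
def accept (τ : ℝ) (E : 𝒳 → ℝ) (y x : 𝒳) : ℝ :=
  min 1 (Real.exp (-τ * E y) / Real.exp (-τ * E x))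

/-- The equi-energy swap kernel `T(y, x, ·)`. -/
def swapK (τ : ℝ) (E : 𝒳 → ℝ) (y x : 𝒳) : Measure 𝒳 :=
  ENNReal.ofReal (accept τ E y x) • Measure.dirac y
    + ENNReal.ofReal (1 - accept τ E y x) • Measure.dirac x

/-- The adaptive kernel `P_μ = θ P + (1-θ) ∫ μ(dy) T(y, ·, ·)`. -/
def adaptK (θ τ : ℝ) (E : 𝒳 → ℝ) (P : 𝒳 → Measure 𝒳) (μ : Measure 𝒳) (x : 𝒳) :
    Measure 𝒳 :=
  ENNReal.ofReal θ • P x + ENNReal.ofReal (1 - θ) • μ.bind (fun y => swapK τ E y x)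

/-- `W`-norm distance `‖μ − ν‖_W` between measures. -/
def vdist (W : 𝒳 → ℝ) (μ ν : Measure 𝒳) : ℝ≥0∞ :=
  ⨆ g ∈ {g : 𝒳 → ℝ | Measurable g ∧ ∀ x, |g x| ≤ W x},
    ENNReal.ofReal |∫ x, g x ∂μ - ∫ x, g x ∂ν|

lemma accept_nonneg {α : Type*} (τ : ℝ) (E : α → ℝ) (y x : α) : 0 ≤ accept τ E y x :=
  le_min zero_le_one (div_nonneg (exp_pos _).le (exp_pos _).le)

lemma accept_le_one {α : Type*} (τ : ℝ) (E : α → ℝ) (y x : α) : accept τ E y x ≤ 1 :=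
  min_le_left _ _

lemma abs_accept_mul_le {α : Type*} {τ : ℝ} {E : α → ℝ} {r w : ℝ} (y x : α) (h : |r| ≤ w) :
    |accept τ E y x * r| ≤ w := by
  rw [abs_mul, abs_of_nonneg (accept_nonneg τ E y x)]
  exact (mul_le_of_le_one_left (abs_nonneg r) (accept_le_one τ E y x)).trans h

section SwapKernel

variable {τ : ℝ} {E : 𝒳 → ℝ}

lemma measurable_accept (hE : Measurable E) (x : 𝒳) :
    Measurable fun y => accept τ E y x :=
  measurable_const.min ((measurable_exp.comp (hE.const_mul (-τ))).div_const _)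

lemma measurable_swapK (hE : Measurable E) (x : 𝒳) : Measurable fun y => swapK τ E y x := by
  refine Measure.measurable_of_measurable_coe _ fun s hs => ?_
  simp only [swapK, Measure.coe_add, Pi.add_apply, Measure.smul_apply, smul_eq_mul]
  exact ((measurable_accept hE x).ennreal_ofReal.mul
      ((Measure.measurable_coe hs).comp Measure.measurable_dirac)).add
    ((measurable_const.sub (measurable_accept hE x)).ennreal_ofReal.mul_const _)

lemma bind_swapK (hE : Measurable E) (x : 𝒳) (μ : Measure 𝒳) :
    μ.bind (fun y => swapK τ E y x)
      = μ.withDensity (fun y => ENNReal.ofReal (accept τ E y x))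
        + (∫⁻ y, ENNReal.ofReal (1 - accept τ E y x) ∂μ) • Measure.dirac x := by
  ext s hs
  have hpoint : ∀ y, swapK τ E y x s
      = s.indicator (fun y => ENNReal.ofReal (accept τ E y x)) y
        + ENNReal.ofReal (1 - accept τ E y x) * Measure.dirac x s := by
    intro y
    by_cases hy : y ∈ s <;>
      simp [swapK, Measure.dirac_apply' _ hs, hy]
  have hrej : Measurable fun y => ENNReal.ofReal (1 - accept τ E y x) :=
    (measurable_const.sub (measurable_accept hE x)).ennreal_ofReal
  rw [Measure.bind_apply hs (measurable_swapK hE x).aemeasurable, lintegral_congr hpoint,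
    lintegral_add_right _ (hrej.mul_const _), lintegral_indicator hs, lintegral_mul_const _ hrej]
  simp [withDensity_apply _ hs]

lemma lintegral_one_sub_accept_ne_top (x : 𝒳) (μ : Measure 𝒳) [IsFiniteMeasure μ] :
    ∫⁻ y, ENNReal.ofReal (1 - accept τ E y x) ∂μ ≠ ⊤ :=
  ne_top_of_le_ne_top (measure_ne_top μ Set.univ)
    ((lintegral_mono fun y => ENNReal.ofReal_le_one.2
      (sub_le_self _ (accept_nonneg τ E y x))).trans_eq (by simp))

lemma integrable_bind_swapK_iff (hE : Measurable E) {f : 𝒳 → ℝ} (hf : Measurable f) (x : 𝒳)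
    (μ : Measure 𝒳) [IsFiniteMeasure μ] :
    Integrable f (μ.bind fun y => swapK τ E y x)
      ↔ Integrable (fun y => accept τ E y x * f y) μ := by
  have hdirac : Integrable f
      ((∫⁻ y, ENNReal.ofReal (1 - accept τ E y x) ∂μ) • Measure.dirac x) :=
    (integrable_dirac' hf.stronglyMeasurable enorm_lt_top).smul_measure
      (lintegral_one_sub_accept_ne_top x μ)
  rw [bind_swapK hE x μ, integrable_add_measure, and_iff_left hdirac,
    integrable_withDensity_iff_integrable_smul' (measurable_accept hE x).ennreal_ofReal
      (ae_of_all _ fun _ => ENNReal.ofReal_lt_top)]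
  simp only [ENNReal.toReal_ofReal (accept_nonneg τ E _ x), smul_eq_mul]

lemma integral_bind_swapK (hE : Measurable E) {f : 𝒳 → ℝ} (hf : Measurable f) (x : 𝒳)
    (μ : Measure 𝒳) [IsFiniteMeasure μ] (hi : Integrable (fun y => accept τ E y x * f y) μ) :
    ∫ y, f y ∂(μ.bind fun y => swapK τ E y x)
      = ∫ y, accept τ E y x * f y ∂μ + (∫ y, (1 - accept τ E y x) ∂μ) * f x := by
  have hbind := (integrable_bind_swapK_iff hE hf x μ).2 hi
  rw [bind_swapK hE x μ] at hbind ⊢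
  rw [integral_add_measure hbind.left_of_add_measure hbind.right_of_add_measure,
    integral_withDensity_eq_integral_toReal_smul (measurable_accept hE x).ennreal_ofReal
      (ae_of_all _ fun _ => ENNReal.ofReal_lt_top),
    integral_smul_measure, integral_dirac' _ _ hf.stronglyMeasurable,
    ← integral_eq_lintegral_of_nonneg_ae (f := fun y => 1 - accept τ E y x)
      (ae_of_all _ fun y => sub_nonneg.2 (accept_le_one τ E y x))
      (measurable_const.sub (measurable_accept hE x)).aestronglyMeasurable]
  simp only [ENNReal.toReal_ofReal (accept_nonneg τ E _ x), smul_eq_mul]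

end SwapKernel

section WeightedDistance

variable {W g : 𝒳 → ℝ} {μ ν : Measure 𝒳}

lemma le_vdist (hg : Measurable g) (hgW : ∀ y, |g y| ≤ W y) :
    ENNReal.ofReal |∫ y, g y ∂μ - ∫ y, g y ∂ν| ≤ vdist W μ ν :=
  le_iSup₂_of_le g ⟨hg, hgW⟩ le_rfl

lemma vdist_comm (W : 𝒳 → ℝ) (μ ν : Measure 𝒳) : vdist W μ ν = vdist W ν μ := by
  simp only [vdist, abs_sub_comm]

/-- The truncations `min |g| n` are admissible test functions, so their `μ`-integrals stay
within `vdist W μ ν` of their `ν`-integrals, which are bounded by `∫ |g| dν`; monotone convergence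
then bounds `∫ |g| dμ`. -/
lemma integrable_of_vdist_ne_top [IsFiniteMeasure μ] (hd : vdist W μ ν ≠ ⊤) (hg : Measurable g)
    (hgW : ∀ y, |g y| ≤ W y) (hgν : Integrable g ν) : Integrable g μ := by
  set h : ℕ → 𝒳 → ℝ := fun n y => min |g y| n
  have hmeas : ∀ n, Measurable (h n) := fun n => hg.abs.min measurable_const
  have hnonneg : ∀ n y, 0 ≤ h n y := fun n y => le_min (abs_nonneg _) n.cast_nonneg
  have hle : ∀ n y, h n y ≤ |g y| := fun n y => min_le_left _ _
  have hbound : ∀ n, ∫⁻ y, ENNReal.ofReal (h n y) ∂μ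
      ≤ ENNReal.ofReal (∫ y, |g y| ∂ν) + vdist W μ ν := by
    intro n
    have hμ : Integrable (h n) μ := Integrable.of_bound (hmeas n).aestronglyMeasurable n
      (ae_of_all _ fun y => by
        rw [Real.norm_of_nonneg (hnonneg n y)]
        exact min_le_right _ _)
    have hν : Integrable (h n) ν := hgν.abs.mono' (hmeas n).aestronglyMeasurable
      (ae_of_all _ fun y => (Real.norm_of_nonneg (hnonneg n y)).trans_le (hle n y))
    rw [← ofReal_integral_eq_lintegral_ofReal hμ (ae_of_all _ (hnonneg n))]
    calc ENNReal.ofReal (∫ y, h n y ∂μ)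
        ≤ ENNReal.ofReal (∫ y, h n y ∂ν + |∫ y, h n y ∂μ - ∫ y, h n y ∂ν|) :=
          ENNReal.ofReal_le_ofReal (by linarith [le_abs_self (∫ y, h n y ∂μ - ∫ y, h n y ∂ν)])
      _ ≤ ENNReal.ofReal (∫ y, h n y ∂ν) + ENNReal.ofReal |∫ y, h n y ∂μ - ∫ y, h n y ∂ν| :=
          ENNReal.ofReal_add_le
      _ ≤ ENNReal.ofReal (∫ y, |g y| ∂ν) + vdist W μ ν :=
          add_le_add (ENNReal.ofReal_le_ofReal (integral_mono hν hgν.abs (hle n)))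
            (le_vdist (hmeas n) fun y => (abs_of_nonneg (hnonneg n y)).trans_le
              ((hle n y).trans (hgW y)))
  have hsup : ∀ y, ⨆ n, ENNReal.ofReal (h n y) = ‖g y‖ₑ := by
    intro y
    rw [Real.enorm_eq_ofReal_abs]
    refine le_antisymm (iSup_le fun n => ENNReal.ofReal_le_ofReal (hle n y)) ?_
    exact le_iSup_of_le ⌈|g y|⌉₊ (by simp [h, Nat.le_ceil])
  have hmono : Monotone fun n y => ENNReal.ofReal (h n y) := fun m n hmn y =>
    ENNReal.ofReal_le_ofReal (min_le_min_left _ (Nat.cast_le.2 hmn))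
  refine ⟨hg.aestronglyMeasurable, hasFiniteIntegral_iff_enorm.2 ?_⟩
  calc ∫⁻ y, ‖g y‖ₑ ∂μ = ⨆ n, ∫⁻ y, ENNReal.ofReal (h n y) ∂μ := by
        simp_rw [← hsup]
        exact lintegral_iSup (fun n => (hmeas n).ennreal_ofReal) hmono
    _ ≤ ENNReal.ofReal (∫ y, |g y| ∂ν) + vdist W μ ν := iSup_le hbound
    _ < ⊤ := ENNReal.add_lt_top.2 ⟨ENNReal.ofReal_lt_top, hd.lt_top⟩

end WeightedDistance

lemma abs_integral_add_smul_sub_le {m m₁ m₂ : Measure 𝒳} {c : ℝ≥0∞} {f : 𝒳 → ℝ} (hc : c ≠ ⊤)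
    (hf : Integrable f m₁ ↔ Integrable f m₂) :
    |∫ y, f y ∂(m + c • m₁) - ∫ y, f y ∂(m + c • m₂)|
      ≤ c.toReal * |∫ y, f y ∂m₁ - ∫ y, f y ∂m₂| := by
  rcases eq_or_ne c 0 with rfl | hc0
  · simp
  have hsplit : ∀ m', Integrable f (m + c • m') ↔ Integrable f m ∧ Integrable f m' := fun m' => by
    rw [integrable_add_measure, integrable_smul_measure hc0 hc]
  by_cases hint : Integrable f m ∧ Integrable f m₁
  · obtain ⟨hm, h₁⟩ := hint
    rw [integral_add_measure hm (h₁.smul_measure hc),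
      integral_add_measure hm ((hf.1 h₁).smul_measure hc), integral_smul_measure,
      integral_smul_measure, smul_eq_mul, smul_eq_mul, add_sub_add_left_eq_sub, ← mul_sub,
      abs_mul, abs_of_nonneg ENNReal.toReal_nonneg]
  · rw [integral_undef (mt (hsplit m₁).1 hint),
      integral_undef (mt (hsplit m₂).1 (by rwa [← hf])), sub_self, abs_zero]
    positivity

section SwapEstimate

variable {τ : ℝ} {E : 𝒳 → ℝ} {W f : 𝒳 → ℝ}

lemma integrable_bind_swapK_iff_of_vdist_ne_top (hE : Measurable E) (hf : Measurable f)
    (hfW : ∀ y, |f y| ≤ W y) (x : 𝒳) {μ ν : Measure 𝒳} [IsFiniteMeasure μ] [IsFiniteMeasure ν]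
    (hd : vdist W μ ν ≠ ⊤) :
    Integrable f (μ.bind fun y => swapK τ E y x)
      ↔ Integrable f (ν.bind fun y => swapK τ E y x) := by
  have hg : Measurable fun y => accept τ E y x * f y := (measurable_accept hE x).mul hf
  have hgW : ∀ y, |accept τ E y x * f y| ≤ W y := fun y => abs_accept_mul_le y x (hfW y)
  rw [integrable_bind_swapK_iff hE hf x, integrable_bind_swapK_iff hE hf x]
  exact ⟨integrable_of_vdist_ne_top (vdist_comm W μ ν ▸ hd) hg hgW,
    integrable_of_vdist_ne_top hd hg hgW⟩

lemma integral_bind_swapK_sub (hE : Measurable E) (hf : Measurable f) (x : 𝒳)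
    {μ ν : Measure 𝒳} [IsFiniteMeasure μ] [IsFiniteMeasure ν]
    (hμ : Integrable (fun y => accept τ E y x * f y) μ)
    (hν : Integrable (fun y => accept τ E y x * f y) ν) {w : ℝ} (hw : w ≠ 0) :
    ∫ y, f y ∂(μ.bind fun y => swapK τ E y x) - ∫ y, f y ∂(ν.bind fun y => swapK τ E y x)
      = (∫ y, accept τ E y x * f y ∂μ - ∫ y, accept τ E y x * f y ∂ν)
        + w * (∫ y, f x / w * (1 - accept τ E y x) ∂μ
          - ∫ y, f x / w * (1 - accept τ E y x) ∂ν) := by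
  rw [integral_bind_swapK hE hf x μ hμ, integral_bind_swapK hE hf x ν hν, integral_const_mul,
    integral_const_mul]
  field_simp
  ring

lemma ofReal_abs_integral_bind_swapK_sub_le (hE : Measurable E) (hW : ∀ y, 1 ≤ W y)
    (hf : Measurable f) (hfW : ∀ y, |f y| ≤ W y) (x : 𝒳) (μ ν : Measure 𝒳)
    [IsFiniteMeasure μ] [IsFiniteMeasure ν]
    (hint : Integrable f (μ.bind fun y => swapK τ E y x)
      ↔ Integrable f (ν.bind fun y => swapK τ E y x)) :
    ENNReal.ofReal |∫ y, f y ∂(μ.bind fun y => swapK τ E y x)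
        - ∫ y, f y ∂(ν.bind fun y => swapK τ E y x)|
      ≤ 2 * vdist W μ ν * ENNReal.ofReal (W x) := by
  by_cases hμ : Integrable f (μ.bind fun y => swapK τ E y x)
  swap
  · rw [integral_undef hμ, integral_undef (mt hint.2 hμ), sub_self, abs_zero,
      ENNReal.ofReal_zero]
    exact zero_le
  have hν := hint.1 hμ
  rw [integrable_bind_swapK_iff hE hf x] at hμ hν
  have hWx : 0 < W x := zero_lt_one.trans_le (hW x)
  have hg₂W : ∀ y, |f x / W x * (1 - accept τ E y x)| ≤ W y := fun y => by
    rw [abs_mul, abs_div, abs_of_pos hWx, abs_of_nonneg (sub_nonneg.2 (accept_le_one τ E y x))]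
    exact (mul_le_one₀ ((div_le_one hWx).2 (hfW x)) (sub_nonneg.2 (accept_le_one τ E y x))
      (sub_le_self _ (accept_nonneg τ E y x))).trans (hW y)
  rw [integral_bind_swapK_sub hE hf x hμ hν hWx.ne']
  calc _ ≤ ENNReal.ofReal |∫ y, accept τ E y x * f y ∂μ - ∫ y, accept τ E y x * f y ∂ν|
          + ENNReal.ofReal (W x) * ENNReal.ofReal |∫ y, f x / W x * (1 - accept τ E y x) ∂μ
            - ∫ y, f x / W x * (1 - accept τ E y x) ∂ν| := by
        rw [← ENNReal.ofReal_mul hWx.le, ← abs_of_pos hWx, ← abs_mul, abs_of_pos hWx]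
        exact (ENNReal.ofReal_le_ofReal (abs_add_le _ _)).trans ENNReal.ofReal_add_le
    _ ≤ vdist W μ ν + ENNReal.ofReal (W x) * vdist W μ ν :=
        add_le_add (le_vdist ((measurable_accept hE x).mul hf) fun y =>
            abs_accept_mul_le y x (hfW y))
          (mul_le_mul_right (le_vdist
            ((measurable_const.sub (measurable_accept hE x)).const_mul _) hg₂W) _)
    _ ≤ ENNReal.ofReal (W x) * vdist W μ ν + ENNReal.ofReal (W x) * vdist W μ ν :=
        add_le_add_left (le_mul_of_one_le_left' (ENNReal.one_le_ofReal.2 (hW x))) _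
    _ = 2 * vdist W μ ν * ENNReal.ofReal (W x) := by ring

end SwapEstimate

theorem adaptK_lipschitz_in_measure_general
    [TopologicalSpace 𝒳] [BorelSpace 𝒳]
    (E : 𝒳 → ℝ) (hEcont : Continuous E)
    (τ : ℝ)
    (V : 𝒳 → ℝ) (hV1 : ∀ x, 1 ≤ V x)
    (P : 𝒳 → Measure 𝒳)
    (θ : ℝ) (hθ : θ ∈ Set.Ioc (0 : ℝ) 1)
    (β : ℝ) (hβ : β ∈ Set.Icc (0 : ℝ) 1)
    (μ ν : Measure 𝒳) [IsProbabilityMeasure μ] [IsProbabilityMeasure ν] :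
    ∀ f : 𝒳 → ℝ, Measurable f → (∀ x, |f x| ≤ V x ^ β) →
      ∀ x, ENNReal.ofReal |(∫ y, f y ∂(adaptK θ τ E P μ x)) - ∫ y, f y ∂(adaptK θ τ E P ν x)|
        ≤ 2 * vdist (fun y => V y ^ β) μ ν * ENNReal.ofReal (V x ^ β) := by
  intro f hf hfV x
  have hE : Measurable E := hEcont.measurable
  have hW : ∀ y, 1 ≤ V y ^ β := fun y => one_le_rpow (hV1 y) hβ.1
  by_cases hd : vdist (fun y => V y ^ β) μ ν = ⊤
  · have hVx : ENNReal.ofReal (V x ^ β) ≠ 0 :=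
      (ENNReal.ofReal_pos.2 (zero_lt_one.trans_le (hW x))).ne'
    simp [hd, hVx]
  have hint := integrable_bind_swapK_iff_of_vdist_ne_top (τ := τ) hE hf hfV x hd
  have hθ' : (ENNReal.ofReal (1 - θ)).toReal ≤ 1 := by
    rw [ENNReal.toReal_ofReal']
    exact max_le (by linarith [hθ.1]) zero_le_one
  calc ENNReal.ofReal |(∫ y, f y ∂(adaptK θ τ E P μ x)) - ∫ y, f y ∂(adaptK θ τ E P ν x)|
      ≤ ENNReal.ofReal |∫ y, f y ∂(μ.bind fun y => swapK τ E y x)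
          - ∫ y, f y ∂(ν.bind fun y => swapK τ E y x)| :=
        ENNReal.ofReal_le_ofReal ((abs_integral_add_smul_sub_le ENNReal.ofReal_ne_top hint).trans
          (mul_le_of_le_one_left (abs_nonneg _) hθ'))
    _ ≤ 2 * vdist (fun y => V y ^ β) μ ν * ENNReal.ofReal (V x ^ β) :=
        ofReal_abs_integral_bind_swapK_sub_le hE hW hf hfV x μ ν hint

/-- **Lipschitz dependence of the adaptive kernel on the auxiliary measure** (Lemma 4.2):
for `β ∈ [0,1]` and probability measures `μ, ν`, the operator-norm bound
`|||P_μ − P_ν|||_{V^β} ≤ 2 ‖μ − ν‖_{V^β}` holds; that is, for every `f` with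
`|f|_{V^β} ≤ 1` and every `x`, `|P_μ f(x) − P_ν f(x)| ≤ 2 ‖μ − ν‖_{V^β} V^β(x)`. -/
theorem adaptK_lipschitz_in_measure
    [TopologicalSpace 𝒳] [PolishSpace 𝒳] [BorelSpace 𝒳]
    (E : 𝒳 → ℝ) (hEcont : Continuous E) (hEbdd : BddBelow (Set.range E))
    (t t' τ : ℝ) (ht : 0 < t) (htt' : t < t') (hτ : τ = 1 / t - 1 / t')
    (c κ : ℝ) (hc : 0 < c) (hκpos : 0 < κ) (hκ1 : κ < 1) (hκτ : κ < τ)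
    (V : 𝒳 → ℝ) (hV : ∀ x, V x = c * Real.exp (κ * E x)) (hV1 : ∀ x, 1 ≤ V x)
    (P : 𝒳 → Measure 𝒳) (hPmeas : Measurable P) (hPprob : ∀ x, IsProbabilityMeasure (P x))
    (θ : ℝ) (hθ : θ ∈ Set.Ioc (0 : ℝ) 1)
    (β : ℝ) (hβ : β ∈ Set.Icc (0 : ℝ) 1)
    (μ ν : Measure 𝒳) [IsProbabilityMeasure μ] [IsProbabilityMeasure ν] :
    ∀ f : 𝒳 → ℝ, Measurable f → (∀ x, |f x| ≤ V x ^ β) →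
      ∀ x, ENNReal.ofReal |(∫ y, f y ∂(adaptK θ τ E P μ x)) - ∫ y, f y ∂(adaptK θ τ E P ν x)|
        ≤ 2 * vdist (fun y => V y ^ β) μ ν * ENNReal.ofReal (V x ^ β) :=
  adaptK_lipschitz_in_measure_general E hEcont τ V hV1 P θ hθ β hβ μ ν

end
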